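/- arXiv:1303.6139 — 4 statements merged into one kernel-verified Lean document; each statement's English description precedes it below -/
import Mathlib

section
/- Let k be a positive integer with k = ⌊p⌋ for a real p > 1. Then there exists a constant C > 0 (independent of a, b) such that for all real a > 0 and all real b, |-(max(a+b,0))^p + a^p + p a^{p-1} b + ... + (p(p-1)...(p-k+1)/k!) a^{p-k} b^k| ≤ C |b|^p. -/
open Real Finset

/-!
The remainder `R p k a b` satisfies `∂_b R p (k + 1) a b = p * R (p - 1) k a b`, and a function
vanishing at `0` with `|f' t| ≤ M * |t| ^ (q - 1)` obeys `|f b| ≤ M / q * |b| ^ q`. Hence the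
bound `|R p k a b| ≤ |b| ^ p` (so `C = 1`) for `k < p ≤ k + 1` follows by induction on `k` from
the case `0 < p ≤ 1`, which is the Hölder continuity of `x ↦ x ^ p` on `[0, ∞)`. For an integer
`p = k` the Taylor polynomial is `(a + b) ^ k`, so the remainder vanishes unless `a + b < 0`,
where it is `|a + b| ^ k ≤ |b| ^ k`.
-/

theorem Ring.choose_eq_prod_range_div_factorial {K : Type*} [Field K] [CharZero K]
    (r : K) (j : ℕ) :
    Ring.choose r j = (∏ m ∈ range j, (r - m)) / j.factorial := by
  rw [Ring.choose_eq_smul, ← Polynomial.aeval_eq_smeval, Polynomial.aeval_def,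
    Polynomial.eval₂_eq_eval_map, descPochhammer_map, descPochhammer_eval_eq_prod_range,
    smul_eq_mul, inv_mul_eq_div]

theorem Ring.succ_mul_choose_succ {R : Type*} [NonAssocRing R] [Pow R ℕ] [BinomialRing R]
    [NatPowAssoc R] (r : R) (j : ℕ) :
    ((j : R) + 1) * Ring.choose r (j + 1) = r * Ring.choose (r - 1) j := by
  simpa [Ring.choose_one_right, Nat.choose_one_right] using
    Ring.choose_smul_choose r (Nat.le_add_left 1 j)

theorem hasDerivAt_max_zero_rpow {p : ℝ} (hp : 1 < p) (x : ℝ) :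
    HasDerivAt (fun x : ℝ => max x 0 ^ p) (p * max x 0 ^ (p - 1)) x := by
  rcases lt_trichotomy x 0 with hx | rfl | hx
  · have hconst : (fun y : ℝ => max y 0 ^ p) =ᶠ[nhds x] fun _ => 0 := by
      filter_upwards [eventually_lt_nhds hx] with y hy
      rw [max_eq_right hy.le, zero_rpow (by linarith)]
    rw [max_eq_right hx.le, zero_rpow (by linarith), mul_zero]
    exact (hasDerivAt_const x 0).congr_of_eventuallyEq hconst
  · have hleft : HasDerivWithinAt (fun y : ℝ => max y 0 ^ p) 0 (Set.Iic 0) 0 :=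
      (hasDerivWithinAt_const 0 _ 0).congr (fun y hy => by
        rw [max_eq_right hy, zero_rpow (by linarith)]) (by simp [zero_rpow (by linarith : p ≠ 0)])
    have hright : HasDerivWithinAt (fun y : ℝ => max y 0 ^ p) 0 (Set.Ici 0) 0 := by
      have := (hasDerivAt_rpow_const (x := 0) (Or.inr hp.le)).hasDerivWithinAt (s := Set.Ici 0)
      rw [zero_rpow (by linarith), mul_zero] at this
      exact this.congr (fun y hy => by rw [max_eq_left hy]) (by simp)
    rw [max_self, zero_rpow (by linarith), mul_zero, ← hasDerivWithinAt_univ,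
      ← Set.Iic_union_Ici]
    exact hleft.union hright
  · have hpow : (fun y : ℝ => max y 0 ^ p) =ᶠ[nhds x] fun y => y ^ p := by
      filter_upwards [eventually_gt_nhds hx] with y hy
      rw [max_eq_left hy.le]
    rw [max_eq_left hx.le]
    exact (hasDerivAt_rpow_const (Or.inl hx.ne')).congr_of_eventuallyEq hpow

theorem abs_le_of_abs_deriv_le_rpow_of_nonneg {f f' : ℝ → ℝ} {q M : ℝ} (hq : 1 ≤ q)
    (h0 : f 0 = 0) (hf : ∀ t, HasDerivAt f (f' t) t) (hf' : ∀ t, |f' t| ≤ M * |t| ^ (q - 1))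
    {b : ℝ} (hb : 0 ≤ b) : |f b| ≤ M / q * b ^ q := by
  have hB : ∀ t, HasDerivAt (fun t => M / q * t ^ q) (M / q * (q * t ^ (q - 1))) t :=
    fun t => (hasDerivAt_rpow_const (Or.inr hq)).const_mul _
  refine image_norm_le_of_norm_deriv_right_le_deriv_boundary
    (fun t _ => (hf t).continuousAt.continuousWithinAt) (fun t _ => (hf t).hasDerivWithinAt)
    (by simp [h0, zero_rpow (by linarith : q ≠ 0)]) hB (fun t ht => ?_) ⟨hb, le_rfl⟩
  calc ‖f' t‖ ≤ M * |t| ^ (q - 1) := hf' t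
    _ = M / q * (q * t ^ (q - 1)) := by
      rw [abs_of_nonneg ht.1]; field_simp

theorem abs_le_of_abs_deriv_le_rpow {f f' : ℝ → ℝ} {q M : ℝ} (hq : 1 ≤ q)
    (h0 : f 0 = 0) (hf : ∀ t, HasDerivAt f (f' t) t) (hf' : ∀ t, |f' t| ≤ M * |t| ^ (q - 1))
    (b : ℝ) : |f b| ≤ M / q * |b| ^ q := by
  rcases le_total 0 b with hb | hb
  · rw [abs_of_nonneg hb]
    exact abs_le_of_abs_deriv_le_rpow_of_nonneg hq h0 hf hf' hb
  · have hreflect : ∀ t, HasDerivAt (fun t => f (-t)) (-f' (-t)) t := fun t => by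
      have := (hf (-t)).comp t (hasDerivAt_neg t)
      rwa [mul_neg_one] at this
    have := abs_le_of_abs_deriv_le_rpow_of_nonneg hq (by simpa using h0) hreflect
      (fun t => by simpa using hf' (-t)) (neg_nonneg.2 hb)
    rwa [neg_neg, ← abs_of_nonpos hb] at this

theorem abs_rpow_sub_rpow_le {p : ℝ} (hp0 : 0 ≤ p) (hp1 : p ≤ 1) {x y : ℝ} (hx : 0 ≤ x)
    (hy : 0 ≤ y) : |x ^ p - y ^ p| ≤ |x - y| ^ p := by
  wlog hyx : y ≤ x generalizing x y
  · rw [abs_sub_comm, abs_sub_comm x]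
    exact this hy hx (le_of_not_ge hyx)
  have hsub : x ^ p ≤ (x - y) ^ p + y ^ p := by
    simpa using rpow_add_le_add_rpow (sub_nonneg.2 hyx) hy hp0 hp1
  rw [abs_of_nonneg (sub_nonneg.2 (rpow_le_rpow hy hyx hp0)), abs_of_nonneg (sub_nonneg.2 hyx)]
  linarith

noncomputable def posPartRpowRemainder (p : ℝ) (k : ℕ) (a b : ℝ) : ℝ :=
  -(max (a + b) 0 ^ p) + ∑ j ∈ range (k + 1), Ring.choose p j * a ^ (p - j) * b ^ j

theorem posPartRpowRemainder_zero_right {p : ℝ} (k : ℕ) {a : ℝ} (ha : 0 < a) :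
    posPartRpowRemainder p k a 0 = 0 := by
  rw [posPartRpowRemainder, sum_eq_single_of_mem 0 (by simp) fun j _ hj => by simp [hj]]
  simp [max_eq_left ha.le]

theorem hasDerivAt_posPartRpowRemainder {p : ℝ} (hp : 1 < p) (k : ℕ) (a b : ℝ) :
    HasDerivAt (posPartRpowRemainder p (k + 1) a)
      (p * posPartRpowRemainder (p - 1) k a b) b := by
  have hmax : HasDerivAt (fun b => max (a + b) 0 ^ p) (p * max (a + b) 0 ^ (p - 1)) b :=
    (hasDerivAt_max_zero_rpow hp (a + b)).comp_const_add a b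
  have hterm : ∀ j : ℕ, HasDerivAt
      (fun b => Ring.choose p (j + 1) * a ^ (p - (j + 1 : ℕ)) * b ^ (j + 1))
      (p * (Ring.choose (p - 1) j * a ^ (p - 1 - j) * b ^ j)) b := fun j => by
    refine ((hasDerivAt_pow (j + 1) b).const_mul _).congr_deriv ?_
    have hcoeff := Ring.succ_mul_choose_succ p j
    rw [Nat.add_sub_cancel, show p - (j + 1 : ℕ) = p - 1 - j by push_cast; ring]
    push_cast
    linear_combination (a ^ (p - 1 - j) * b ^ j) * hcoeff
  have hsum := (HasDerivAt.fun_sum (u := range (k + 1)) fun j _ => hterm j).const_add (a ^ p)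
  have hshift : posPartRpowRemainder p (k + 1) a = fun b => -(max (a + b) 0 ^ p) + (a ^ p +
      ∑ j ∈ range (k + 1), Ring.choose p (j + 1) * a ^ (p - (j + 1 : ℕ)) * b ^ (j + 1)) := by
    funext b
    rw [posPartRpowRemainder, sum_range_succ']
    simp [add_comm]
  rw [hshift]
  refine (hmax.fun_neg.fun_add hsum).congr_deriv ?_
  rw [posPartRpowRemainder, mul_add, mul_sum]
  ring

theorem abs_posPartRpowRemainder_le (k : ℕ) {p : ℝ} (hkp : k < p) (hpk : p ≤ k + 1) {a : ℝ}
    (ha : 0 < a) (b : ℝ) : |posPartRpowRemainder p k a b| ≤ |b| ^ p := by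
  induction k generalizing p b with
  | zero =>
    rw [Nat.cast_zero] at hkp
    rw [Nat.cast_zero, zero_add] at hpk
    have hzero : posPartRpowRemainder p 0 a b = a ^ p - max (a + b) 0 ^ p := by
      simp [posPartRpowRemainder, neg_add_eq_sub]
    have hclose : |a - max (a + b) 0| ≤ |b| := by
      simpa [max_eq_left ha.le] using abs_max_sub_max_le_abs a (a + b) 0
    rw [hzero]
    calc |a ^ p - max (a + b) 0 ^ p| ≤ |a - max (a + b) 0| ^ p :=
          abs_rpow_sub_rpow_le hkp.le hpk ha.le (le_max_right _ _)
      _ ≤ |b| ^ p := rpow_le_rpow (abs_nonneg _) hclose hkp.le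
  | succ k ih =>
    push_cast at hkp hpk
    have hp : 1 < p := by linarith [(Nat.cast_nonneg k : (0 : ℝ) ≤ k)]
    have hderiv : ∀ t, |p * posPartRpowRemainder (p - 1) k a t| ≤ p * |t| ^ (p - 1) := by
      intro t
      rw [abs_mul, abs_of_pos (by linarith : 0 < p)]
      exact mul_le_mul_of_nonneg_left (ih (by linarith) (by linarith) t) (by linarith)
    simpa [div_self (by linarith : p ≠ 0)] using
      abs_le_of_abs_deriv_le_rpow hp.le (posPartRpowRemainder_zero_right (k + 1) ha)
        (hasDerivAt_posPartRpowRemainder hp k a) hderiv b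

theorem abs_posPartRpowRemainder_natCast_le {n : ℕ} (hn : n ≠ 0) {a : ℝ} (ha : 0 < a)
    (b : ℝ) :
    |posPartRpowRemainder n n a b| ≤ |b| ^ (n : ℝ) := by
  have hbinom : ∑ j ∈ range (n + 1), Ring.choose (n : ℝ) j * a ^ ((n : ℝ) - j) * b ^ j
      = (a + b) ^ n := by
    rw [add_comm a b, add_pow]
    refine sum_congr rfl fun j hj => ?_
    rw [Ring.choose_natCast, ← Nat.cast_sub (by simpa [Nat.lt_succ_iff] using hj), rpow_natCast]
    ring
  rw [posPartRpowRemainder, hbinom, rpow_natCast, rpow_natCast]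
  rcases le_or_gt 0 (a + b) with hab | hab
  · simp [max_eq_left hab]
  · rw [max_eq_right hab.le, zero_pow hn, neg_zero, zero_add, abs_pow]
    have hclose : |a + b| ≤ |b| := by
      rw [abs_of_neg hab, abs_of_neg (by linarith)]
      linarith
    exact pow_le_pow_left₀ (abs_nonneg _) hclose n

/-- Taylor-type estimate for `t ↦ t₊^p` at order `k = ⌊p⌋`. -/
theorem stmt0 (p : ℝ) (hp : 1 < p) (k : ℕ) (hk : k = ⌊p⌋₊) :
    ∃ C > 0, ∀ a b : ℝ, 0 < a →
      |(-(max (a + b) 0 ^ p)) + ∑ j ∈ Finset.range (k + 1),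
          ((∏ m ∈ Finset.range j, (p - (m : ℝ))) / (Nat.factorial j : ℝ)) *
            a ^ (p - (j : ℝ)) * b ^ j|
        ≤ C * |b| ^ p := by
  refine ⟨1, one_pos, fun a b ha => ?_⟩
  simp only [← Ring.choose_eq_prod_range_div_factorial, one_mul]
  change |posPartRpowRemainder p k a b| ≤ |b| ^ p
  have hkp : (k : ℝ) ≤ p := hk ▸ Nat.floor_le (by linarith)
  have hpk : p < k + 1 := hk ▸ Nat.lt_floor_add_one p
  rcases hkp.eq_or_lt with rfl | hkp
  · exact abs_posPartRpowRemainder_natCast_le (by rintro rfl; norm_num at hp) ha b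
  · exact abs_posPartRpowRemainder_le k hkp hpk.le ha b
end

section
/- Let f, g : ℝ^N → ℝ be measurable, C, A > 0 with |f(x)| ≤ C e^{-|x|} and |g(x)| ≤ C e^{-|x|} |x|^{(1-N)/2} for |x| > A. Let a > b > 0. For y₀ ∈ ℝ with |y₀| → ∞ and α = |y₀|/2, the integral ∫_{√α < |x| < α} |f(x)|^a |g(x - (y₀,0))|^b dx = o(|y₀|^{b(1-N)/2} e^{-b|y₀|}) as |y₀| → ∞. -/
/-!
Write `α = |y₀|/2` and `y = (y₀, 0)`. On the annulus `√α < ‖x‖ < α` both decay bounds apply,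
and `‖x - y‖ ≥ 2α - ‖x‖ ≥ α`. Hence the integrand is at most
`C^(a+b) e^{-a‖x‖} e^{-b(2α - ‖x‖)} α^{b(1-N)/2} ≤ C^(a+b) e^{-(a-b)√α} · α^{b(1-N)/2} e^{-b|y₀|}`,
since `a > b`. The annulus has volume `O(α^N)`, and `α^N e^{-(a-b)√α} → 0`, which supplies the
little-o factor.
-/

open Real MeasureTheory Filter Asymptotics Topology Metric Module

theorem tendsto_pow_mul_exp_neg_mul_sqrt_atTop_nhds_zero (n : ℕ) {c : ℝ} (hc : 0 < c) :
    Tendsto (fun t : ℝ => t ^ n * exp (-c * √t)) atTop (𝓝 0) := by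
  have h := (tendsto_rpow_mul_exp_neg_mul_atTop_nhds_zero ((2 * n : ℕ) : ℝ) c hc).comp
    tendsto_sqrt_atTop
  refine h.congr' ?_
  filter_upwards [eventually_ge_atTop (0 : ℝ)] with t ht
  rw [Function.comp_apply, rpow_natCast, pow_mul, sq_sqrt ht]

theorem abs_rpow_le_of_abs_le_mul_exp {u C t w s : ℝ} (hC : 0 ≤ C) (hw : 0 ≤ w) (hs : 0 ≤ s)
    (h : |u| ≤ C * exp (-t) * w) : |u| ^ s ≤ C ^ s * exp (-s * t) * w ^ s := by
  calc |u| ^ s ≤ (C * exp (-t) * w) ^ s := rpow_le_rpow (abs_nonneg u) h hs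
    _ = C ^ s * exp (-s * t) * w ^ s := by
      rw [mul_rpow (by positivity) hw, mul_rpow hC (exp_pos _).le, ← exp_mul]
      ring_nf

section Annulus

variable {E : Type*} [NormedAddCommGroup E]

theorem abs_rpow_mul_abs_rpow_le_of_mem_annulus {f g : E → ℝ} {C A q a b α : ℝ}
    (hC : 0 ≤ C) (hq : q ≤ 0) (hb : 0 ≤ b) (hab : b ≤ a)
    (hfb : ∀ x : E, A < ‖x‖ → |f x| ≤ C * exp (-‖x‖))
    (hgb : ∀ x : E, A < ‖x‖ → |g x| ≤ C * exp (-‖x‖) * ‖x‖ ^ q)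
    (hαA : A < √α) {x y : E} (hy : ‖y‖ = 2 * α) (hx₁ : √α < ‖x‖) (hx₂ : ‖x‖ < α) :
    |f x| ^ a * |g (x - y)| ^ b ≤
      C ^ a * C ^ b * exp (-(a - b) * √α) * (α ^ (b * q) * exp (-b * (2 * α))) := by
  have hxA : A < ‖x‖ := hαA.trans hx₁
  have hα : 0 < α := (norm_nonneg x).trans_lt hx₂
  have hxy' : 2 * α - ‖x‖ ≤ ‖x - y‖ := by
    rw [← hy, norm_sub_rev]
    exact norm_sub_norm_le y x
  have hxy : α ≤ ‖x - y‖ := by linarith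
  have hfx : |f x| ^ a ≤ C ^ a * exp (-a * ‖x‖) := by
    have := abs_rpow_le_of_abs_le_mul_exp hC zero_le_one (hb.trans hab)
      (by rw [mul_one]; exact hfb x hxA)
    rwa [one_rpow, mul_one] at this
  have hgxy : |g (x - y)| ^ b ≤ C ^ b * exp (-b * ‖x - y‖) * α ^ (b * q) := by
    have hg : |g (x - y)| ≤ C * exp (-‖x - y‖) * α ^ q :=
      (hgb _ (hxA.trans (hx₂.trans_le hxy))).trans <|
        mul_le_mul_of_nonneg_left (rpow_le_rpow_of_nonpos hα hxy hq) (by positivity)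
    rw [mul_comm b q, rpow_mul hα.le]
    exact abs_rpow_le_of_abs_le_mul_exp hC (rpow_nonneg hα.le q) hb hg
  have hexp : exp (-a * ‖x‖) * exp (-b * ‖x - y‖) ≤ exp (-(a - b) * √α) * exp (-b * (2 * α)) := by
    rw [← exp_add, ← exp_add, exp_le_exp]
    nlinarith [mul_le_mul_of_nonneg_left hx₁.le (sub_nonneg.2 hab),
      mul_le_mul_of_nonneg_left hxy' hb]
  calc |f x| ^ a * |g (x - y)| ^ b
      ≤ C ^ a * exp (-a * ‖x‖) * (C ^ b * exp (-b * ‖x - y‖) * α ^ (b * q)) :=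
        mul_le_mul hfx hgxy (by positivity) (by positivity)
    _ = C ^ a * C ^ b * (exp (-a * ‖x‖) * exp (-b * ‖x - y‖)) * α ^ (b * q) := by ring
    _ ≤ C ^ a * C ^ b * (exp (-(a - b) * √α) * exp (-b * (2 * α))) * α ^ (b * q) := by gcongr
    _ = C ^ a * C ^ b * exp (-(a - b) * √α) * (α ^ (b * q) * exp (-b * (2 * α))) := by ring

variable [NormedSpace ℝ E] [MeasurableSpace E] [BorelSpace E] [FiniteDimensional ℝ E]
  (μ : Measure E) [μ.IsAddHaarMeasure]

theorem measureReal_le_of_subset_ball {s : Set E} {r : ℝ} (hr : 0 < r) (hs : s ⊆ ball 0 r) :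
    μ.real s ≤ r ^ finrank ℝ E * μ.real (ball 0 1) := by
  refine (measureReal_mono hs measure_ball_lt_top.ne).trans_eq ?_
  rw [measureReal_def, Measure.addHaar_ball_of_pos μ 0 hr, ENNReal.toReal_mul,
    ENNReal.toReal_ofReal (by positivity), measureReal_def]

theorem norm_setIntegral_annulus_le {f g : E → ℝ} {C A q a b α : ℝ}
    (hC : 0 ≤ C) (hq : q ≤ 0) (hb : 0 ≤ b) (hab : b ≤ a)
    (hfb : ∀ x : E, A < ‖x‖ → |f x| ≤ C * exp (-‖x‖))
    (hgb : ∀ x : E, A < ‖x‖ → |g x| ≤ C * exp (-‖x‖) * ‖x‖ ^ q)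
    (hαA : A < √α) (hα : 0 < α) {y : E} (hy : ‖y‖ = 2 * α) :
    ‖∫ x in {x : E | √α < ‖x‖ ∧ ‖x‖ < α}, |f x| ^ a * |g (x - y)| ^ b ∂μ‖ ≤
      C ^ a * C ^ b * μ.real (ball 0 1) * (α ^ finrank ℝ E * exp (-(a - b) * √α)) *
        (α ^ (b * q) * exp (-b * (2 * α))) := by
  have hsub : {x : E | √α < ‖x‖ ∧ ‖x‖ < α} ⊆ ball 0 α := fun x hx => mem_ball_zero_iff.2 hx.2
  calc _ ≤ C ^ a * C ^ b * exp (-(a - b) * √α) * (α ^ (b * q) * exp (-b * (2 * α))) *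
          μ.real {x : E | √α < ‖x‖ ∧ ‖x‖ < α} :=
        norm_setIntegral_le_of_norm_le_const ((measure_mono hsub).trans_lt measure_ball_lt_top)
          fun x hx => by
            rw [norm_of_nonneg (by positivity)]
            exact abs_rpow_mul_abs_rpow_le_of_mem_annulus hC hq hb hab hfb hgb hαA hy hx.1 hx.2
    _ ≤ C ^ a * C ^ b * exp (-(a - b) * √α) * (α ^ (b * q) * exp (-b * (2 * α))) *
          (α ^ finrank ℝ E * μ.real (ball 0 1)) := by
        gcongr
        exact measureReal_le_of_subset_ball μ hα hsub
    _ = _ := by ring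

end Annulus

/-- The contribution of the intermediate annulus `√α < |x| < α`, `α = |y₀|/2`, to the
convolution-type integral is negligible compared to `|y₀|^{b(1-N)/2} e^{-b|y₀|}`
as `|y₀| → ∞`. -/
theorem stmt2 (N : ℕ) (hN : 2 ≤ N)
    (f g : EuclideanSpace ℝ (Fin N) → ℝ)
    (C A : ℝ) (hC : 0 < C)
    (hfb : ∀ x : EuclideanSpace ℝ (Fin N), A < ‖x‖ → |f x| ≤ C * Real.exp (-‖x‖))
    (hgb : ∀ x : EuclideanSpace ℝ (Fin N), A < ‖x‖ →
      |g x| ≤ C * Real.exp (-‖x‖) * ‖x‖ ^ (((1 : ℝ) - N) / 2))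
    (a b : ℝ) (hb : 0 < b) (hab : b < a) :
    (fun y₀ : ℝ => ∫ x in {x : EuclideanSpace ℝ (Fin N) |
          Real.sqrt (|y₀| / 2) < ‖x‖ ∧ ‖x‖ < |y₀| / 2},
        |f x| ^ a * |g (x - EuclideanSpace.single (⟨0, by omega⟩ : Fin N) y₀)| ^ b)
      =o[Filter.comap (fun y₀ : ℝ => |y₀|) Filter.atTop]
      (fun y₀ : ℝ => |y₀| ^ (b * ((1 - (N : ℝ)) / 2)) * Real.exp (-b * |y₀|)) := by
  set L := comap (fun y₀ : ℝ => |y₀|) atTop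
  set p := b * ((1 - (N : ℝ)) / 2)
  set K := C ^ a * C ^ b * volume.real (ball (0 : EuclideanSpace ℝ (Fin N)) 1)
  have hq : ((1 : ℝ) - N) / 2 ≤ 0 := by
    have : (2 : ℝ) ≤ N := by exact_mod_cast hN
    linarith
  have hα : Tendsto (fun y₀ : ℝ => |y₀| / 2) L atTop := tendsto_comap.atTop_div_const two_pos
  have hsmall : (fun y₀ : ℝ => K * ((|y₀| / 2) ^ N * exp (-(a - b) * √(|y₀| / 2)))) =o[L]
      fun _ => (1 : ℝ) := by
    rw [isLittleO_one_iff]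
    simpa using ((tendsto_pow_mul_exp_neg_mul_sqrt_atTop_nhds_zero N (sub_pos.2 hab)).comp
      hα).const_mul K
  have hprod := hsmall.mul_isBigO
    ((isBigO_refl (fun y₀ : ℝ => |y₀| ^ p * exp (-b * |y₀|)) L).const_mul_left (2 ^ p)⁻¹)
  simp only [one_mul] at hprod
  refine (IsBigO.of_bound' ?_).trans_isLittleO hprod
  filter_upwards [(tendsto_sqrt_atTop.comp hα).eventually_gt_atTop A, hα.eventually_gt_atTop 0]
    with y₀ hαA hα₀
  have hy : ‖EuclideanSpace.single (⟨0, by omega⟩ : Fin N) y₀‖ = 2 * (|y₀| / 2) := by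
    rw [PiLp.norm_single, norm_eq_abs]; ring
  refine ((norm_setIntegral_annulus_le volume hC.le hq hb.le hab.le hfb hgb hαA hα₀ hy).trans_eq
    ?_).trans (le_norm_self _)
  rw [finrank_euclideanSpace_fin, div_rpow (abs_nonneg y₀) zero_le_two,
    mul_div_cancel₀ _ two_ne_zero]
  ring
end

section
/- Let G be the Green function of -Δ + 1 on ℝ^N (N ≥ 2) with zero Dirichlet condition at infinity. Then for every 0 < η < 1 there exists C > 0 such that for all x ∈ ℝ^N, ∫_{ℝ^N} G(y - x) e^{-η|y|} dy ≤ C e^{-η|x|}. -/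
/-!
Since `‖x‖ ≤ ‖y‖ + ‖y - x‖` and `η ≥ 0`, the weights satisfy
`e^{-‖y-x‖} e^{-η‖y‖} ≤ e^{-η‖x‖} e^{-(1-η)‖y-x‖}`, so the integral is at most `e^{-η‖x‖}` times
the integral of the translated radial kernel `C e^{-(1-η)r} r^{2-N} (1+r)^{(N-3)/2}`. That kernel
is integrable: in polar coordinates `r^{N-1} r^{2-N} = r` is harmless at `0`, and `1 - η > 0`
makes the exponential beat every power at infinity.
-/

open Real MeasureTheory
open Set Filter Asymptotics Topology

lemma tendsto_one_add_rpow_mul_exp_neg_mul_atTop_nhds_zero (p : ℝ) {b : ℝ} (hb : 0 < b) :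
    Tendsto (fun y : ℝ => (1 + y) ^ p * exp (-b * y)) atTop (𝓝 0) := by
  have h := ((tendsto_rpow_mul_exp_neg_mul_atTop_nhds_zero p b hb).comp
    (tendsto_atTop_add_const_left atTop 1 tendsto_id)).mul_const (exp b)
  rw [zero_mul] at h
  refine h.congr fun y => ?_
  simp only [Function.comp_apply, id, mul_assoc, ← exp_add]
  ring_nf

lemma isBigO_rpow_mul_exp_neg_mul_mul_one_add_rpow_atTop (s p : ℝ) {ε : ℝ} (hε : 0 < ε) :
    (fun y : ℝ => y ^ s * (exp (-ε * y) * (1 + y) ^ p)) =O[atTop]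
      fun y => exp (-(ε / 2) * y) := by
  have h₁ := (tendsto_rpow_mul_exp_neg_mul_atTop_nhds_zero s (ε / 4) (by positivity)).isBigO_one ℝ
  have h₂ := (tendsto_one_add_rpow_mul_exp_neg_mul_atTop_nhds_zero p
    (b := ε / 4) (by positivity)).isBigO_one ℝ
  refine ((h₁.mul h₂).mul (isBigO_refl (fun y => exp (-(ε / 2) * y)) atTop)).congr
    (fun y => ?_) (fun y => by simp)
  simp only [mul_assoc, ← exp_add]
  rw [mul_left_comm (exp _) ((1 + y) ^ p), ← exp_add]
  ring_nf

lemma integrableOn_Ioi_rpow_mul_exp_neg_mul_mul_one_add_rpow {s ε : ℝ} (p : ℝ) (hs : -1 < s)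
    (hε : 0 < ε) :
    IntegrableOn (fun y : ℝ => y ^ s * (exp (-ε * y) * (1 + y) ^ p)) (Ioi 0) := by
  have hcont : ContinuousOn (fun y : ℝ => exp (-ε * y) * (1 + y) ^ p) (Ici 0) :=
    (by fun_prop : Continuous fun y : ℝ => exp (-ε * y)).continuousOn.mul <|
      ContinuousOn.rpow_const (f := fun y => 1 + y) (by fun_prop)
        fun y (hy : 0 ≤ y) => Or.inl (by positivity)
  rw [← Ioc_union_Ioi_eq_Ioi zero_le_one]
  refine IntegrableOn.union ?_ ?_
  · have h : IntegrableOn (fun y : ℝ => y ^ s) (Icc 0 1) := by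
      rw [integrableOn_Icc_iff_integrableOn_Ioc,
        ← intervalIntegrable_iff_integrableOn_Ioc_of_le zero_le_one]
      exact intervalIntegral.intervalIntegrable_rpow' hs
    exact (h.mul_continuousOn (hcont.mono Icc_subset_Ici_self) isCompact_Icc).mono_set
      Ioc_subset_Icc_self
  · refine integrable_of_isBigO_exp_neg (half_pos hε) ?_
      (isBigO_rpow_mul_exp_neg_mul_mul_one_add_rpow_atTop s p hε)
    have hpow : ContinuousOn (fun y : ℝ => y ^ s) (Ici 1) :=
      continuousOn_id.rpow_const fun y (hy : 1 ≤ y) => Or.inl (by simp only [id]; positivity)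
    exact hpow.mul (hcont.mono (Ici_subset_Ici.2 zero_le_one))

lemma integrable_exp_neg_mul_norm_mul_rpow_mul_one_add_rpow {E : Type*} [NormedAddCommGroup E]
    [NormedSpace ℝ E] [FiniteDimensional ℝ E] [MeasurableSpace E] [BorelSpace E] [Nontrivial E]
    (μ : Measure E) [μ.IsAddHaarMeasure] {ε a : ℝ} (p : ℝ) (hε : 0 < ε)
    (ha : -(Module.finrank ℝ E : ℝ) < a) :
    Integrable (fun z : E => exp (-ε * ‖z‖) * ‖z‖ ^ a * (1 + ‖z‖) ^ p) μ := by
  have hd : 1 ≤ Module.finrank ℝ E := Module.finrank_pos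
  rw [integrable_fun_norm_addHaar μ (f := fun r => exp (-ε * r) * r ^ a * (1 + r) ^ p)]
  refine (integrableOn_Ioi_rpow_mul_exp_neg_mul_mul_one_add_rpow
    (s := (Module.finrank ℝ E - 1 : ℕ) + a) p (by push_cast [hd]; linarith) hε).congr_fun
    (fun y (hy : 0 < y) => ?_) measurableSet_Ioi
  simp only [rpow_add hy, rpow_natCast, smul_eq_mul]
  ring

lemma exp_neg_norm_sub_mul_exp_neg_mul_norm_le {E : Type*} [SeminormedAddCommGroup E] {η : ℝ}
    (hη : 0 ≤ η) (x y : E) :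
    exp (-‖y - x‖) * exp (-η * ‖y‖) ≤ exp (-η * ‖x‖) * exp (-(1 - η) * ‖y - x‖) := by
  rw [← exp_add, ← exp_add, exp_le_exp]
  nlinarith [norm_sub_norm_le x y, norm_sub_rev x y]

/-- Weighted integrability estimate for the Green function of `-Δ + 1` on `ℝ^N`:
for every `0 < η < 1`, `∫ G(y-x) e^{-η|y|} dy ≤ C' e^{-η|x|}`. -/
theorem stmt5 (N : ℕ) (hN : 2 ≤ N) (G : ℝ → ℝ) (C : ℝ) (hC : 0 < C)
    (hGpos : ∀ r : ℝ, 0 < r → 0 < G r)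
    (hGb : ∀ r : ℝ, 0 < r →
      G r ≤ C * Real.exp (-r) * r ^ ((2 : ℝ) - N) * (1 + r) ^ (((N : ℝ) - 3) / 2))
    (η : ℝ) (hη : 0 < η) (hη1 : η < 1) :
    ∃ C' > 0, ∀ x : EuclideanSpace ℝ (Fin N),
      (∫ y : EuclideanSpace ℝ (Fin N), G ‖y - x‖ * Real.exp (-η * ‖y‖))
        ≤ C' * Real.exp (-η * ‖x‖) := by
  have : Nontrivial (EuclideanSpace ℝ (Fin N)) :=
    Module.nontrivial_of_finrank_pos (R := ℝ) (by rw [finrank_euclideanSpace_fin]; omega)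
  set a : ℝ := (2 : ℝ) - N
  set p : ℝ := ((N : ℝ) - 3) / 2
  set k : EuclideanSpace ℝ (Fin N) → ℝ := fun z =>
    C * (exp (-(1 - η) * ‖z‖) * ‖z‖ ^ a * (1 + ‖z‖) ^ p)
  have hk : Integrable k := (integrable_exp_neg_mul_norm_mul_rpow_mul_one_add_rpow volume p
    (by linarith) (by rw [finrank_euclideanSpace_fin]; linarith)).const_mul C
  have hk_nonneg : 0 ≤ ∫ z, k z := integral_nonneg fun z => by positivity
  refine ⟨(∫ z, k z) + 1, by positivity, fun x => ?_⟩
  have hbound : ∀ y ≠ x, 0 ≤ G ‖y - x‖ * exp (-η * ‖y‖) ∧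
      G ‖y - x‖ * exp (-η * ‖y‖) ≤ exp (-η * ‖x‖) * k (y - x) := by
    intro y hy
    have hr : 0 < ‖y - x‖ := norm_pos_iff.2 (sub_ne_zero.2 hy)
    refine ⟨(mul_pos (hGpos _ hr) (exp_pos _)).le, ?_⟩
    calc G ‖y - x‖ * exp (-η * ‖y‖)
        ≤ C * ‖y - x‖ ^ a * (1 + ‖y - x‖) ^ p * (exp (-‖y - x‖) * exp (-η * ‖y‖)) := by
          grw [hGb _ hr]; exact le_of_eq (by ring)
      _ ≤ C * ‖y - x‖ ^ a * (1 + ‖y - x‖) ^ p * (exp (-η * ‖x‖) * exp (-(1 - η) * ‖y - x‖)) := by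
          gcongr _ * ?_; exact exp_neg_norm_sub_mul_exp_neg_mul_norm_le hη.le x y
      _ = exp (-η * ‖x‖) * k (y - x) := by ring
  calc (∫ y, G ‖y - x‖ * exp (-η * ‖y‖))
      ≤ ∫ y, exp (-η * ‖x‖) * k (y - x) := by
        refine integral_mono_of_nonneg ?_ ((hk.comp_sub_right x).const_mul _) ?_ <;>
          filter_upwards [volume.ae_ne x] with y hy
        exacts [(hbound y hy).1, (hbound y hy).2]
    _ = exp (-η * ‖x‖) * ∫ z, k z := by rw [integral_const_mul, integral_sub_right_eq_self]
    _ ≤ ((∫ z, k z) + 1) * exp (-η * ‖x‖) := by rw [mul_comm]; gcongr; linarith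
end

section
/- With U the ground state of -ΔU + U = U^p on ℝ^N (p ≥ 2 subcritical), and ū_ε = Σ_{i=1}^k Σ_{l ∈ ℤ} U(x - (a_ε^i/ε + 2πl/ε, 0)) the periodic sum of bumps at points with pairwise half-distances at least σ̲ → ∞, one has ‖-Δū_ε + ū_ε - ū_ε^p‖_{L^∞} ≤ C e^{-2σ̲} σ̲^{(1-N)/2} with C independent of ε. -/
open Real

/-- Unit vector along the first coordinate axis of `ℝ^N`. -/
noncomputable def e1 (N : ℕ) : EuclideanSpace ℝ (Fin N) :=
  if h : 0 < N then EuclideanSpace.single (⟨0, h⟩ : Fin N) (1 : ℝ) else 0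

/-- Laplacian of a function on `ℝ^N` (sum of second directional derivatives along the
standard basis). -/
noncomputable def lap {N : ℕ} (f : EuclideanSpace ℝ (Fin N) → ℝ)
    (x : EuclideanSpace ℝ (Fin N)) : ℝ :=
  ∑ i : Fin N, deriv (deriv (fun t : ℝ => f (x + t • EuclideanSpace.single i (1 : ℝ)))) 0

/-- The operator `ℳ(u) = -Δu + u - u₊^p`. -/
noncomputable def Mcal {N : ℕ} (p : ℝ) (u : EuclideanSpace ℝ (Fin N) → ℝ)
    (x : EuclideanSpace ℝ (Fin N)) : ℝ :=
  -(lap u x) + u x - max (u x) 0 ^ p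

lemma aux_summable_int : Summable (fun n : ℤ => Real.exp (-2 * |(n : ℝ)|)) := by
  have hgeo : Summable (fun n : ℕ => Real.exp (-2) ^ n) :=
    summable_geometric_of_lt_one (Real.exp_pos _).le
      (Real.exp_lt_one_iff.mpr (by norm_num))
  apply Summable.of_nat_of_neg_add_one
  · refine hgeo.congr fun n => ?_
    rw [← Real.exp_nat_mul]
    congr 1
    rw [abs_of_nonneg (by positivity)]
    push_cast
    ring
  · refine (hgeo.mul_left (Real.exp (-2))).congr fun n => ?_
    rw [← pow_succ', ← Real.exp_nat_mul]
    congr 1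
    push_cast
    rw [abs_of_nonpos (by push_cast; linarith [Nat.cast_nonneg (α := ℝ) n])]
    push_cast
    ring

lemma aux_rpow_diff (q B : ℝ) (hq : 1 ≤ q) (hB : 1 ≤ B) {x y : ℝ}
    (hy : 0 ≤ y) (hxy : y ≤ x) (hxB : x ≤ B) :
    x ^ q - y ^ q ≤ q * B ^ (q - 1) * (x - y) := by
  rcases eq_or_lt_of_le hxy with rfl | hlt
  · simp
  rcases eq_or_lt_of_le hy with rfl | hy0
  · -- y = 0
    have hx0 : (0:ℝ) < x := hlt
    have h1 : x ^ q = x ^ (q - 1) * x := by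
      have := Real.rpow_add_one hx0.ne' (q - 1)
      rw [show q - 1 + 1 = q by ring] at this
      exact this
    have h2 : x ^ (q - 1) ≤ B ^ (q - 1) :=
      Real.rpow_le_rpow hx0.le hxB (by linarith)
    rw [h1, Real.zero_rpow (by linarith : q ≠ 0)]
    have hB0 : (0:ℝ) ≤ B ^ (q-1) := Real.rpow_nonneg (by linarith) _
    nlinarith [mul_nonneg (mul_nonneg (by linarith : (0:ℝ) ≤ q-1) hB0) hx0.le,
      mul_nonneg (sub_nonneg.mpr h2) hx0.le]
  · -- 0 < y < x
    have hcont : ContinuousOn (fun t : ℝ => t ^ q) (Set.Icc y x) := by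
      intro t ht
      exact (Real.continuousAt_rpow_const t q (Or.inl (by
        have := ht.1; exact ne_of_gt (lt_of_lt_of_le hy0 this)))).continuousWithinAt
    have hderiv : ∀ t ∈ Set.Ioo y x, HasDerivAt (fun t : ℝ => t ^ q)
        (q * t ^ (q - 1)) t := by
      intro t ht
      exact Real.hasDerivAt_rpow_const (Or.inl (ne_of_gt (lt_of_lt_of_le hy0 ht.1.le)))
    obtain ⟨ξ, hξ, hξeq⟩ := exists_hasDerivAt_eq_slope (fun t : ℝ => t ^ q)
      (fun t => q * t ^ (q - 1)) hlt hcont hderiv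
    have hξB : ξ ^ (q - 1) ≤ B ^ (q - 1) :=
      Real.rpow_le_rpow (le_trans hy hξ.1.le) (le_trans hξ.2.le hxB) (by linarith)
    have hxy0 : 0 < x - y := by linarith
    have : x ^ q - y ^ q = q * ξ ^ (q - 1) * (x - y) := by
      field_simp at hξeq
      linarith [hξeq]
    rw [this]
    have hq0 : 0 < q := by linarith
    nlinarith [mul_nonneg (mul_nonneg hq0.le (sub_nonneg.mpr hξB)) hxy0.le]

lemma aux_close (sg u v y : ℝ) (n : ℤ) (h2s : (0:ℝ) < 2 * sg)
    (hq1 : ((n:ℝ)) ≤ (u - y) / (2 * sg)) (hq2 : (u - y) / (2 * sg) < n + 1)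
    (hr1 : ((n:ℝ)) ≤ (v - y) / (2 * sg)) (hr2 : (v - y) / (2 * sg) < n + 1) :
    |u - v| < 2 * sg := by
  rw [abs_sub_lt_iff]
  have he1 : u - y = 2 * sg * ((u - y) / (2 * sg)) := by
    have hs : sg ≠ 0 := (by linarith : (0:ℝ) < sg).ne'
    field_simp
  have he2 : v - y = 2 * sg * ((v - y) / (2 * sg)) := by
    have hs : sg ≠ 0 := (by linarith : (0:ℝ) < sg).ne'
    field_simp
  have k1 := mul_le_mul_of_nonneg_left hq1 h2s.le
  have k2 := mul_lt_mul_of_pos_left hq2 h2s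
  have k3 := mul_le_mul_of_nonneg_left hr1 h2s.le
  have k4 := mul_lt_mul_of_pos_left hr2 h2s
  constructor <;> linarith [k1, k2, k3, k4]

set_option maxHeartbeats 2000000 in
/-- Sup-norm estimate for the error of the periodic multi-bump approximate solution:
`‖ℳ(ū_ε)‖_∞ ≤ C e^{-2σ̲} σ̲^{(1-N)/2}` with `C` independent of `ε` (the configuration is
quantified through its period `P`, centers `c i`, and minimal half-separation `σ`). -/
theorem stmt9 (N : ℕ) (hN : 2 ≤ N) (p : ℝ) (hp : 2 ≤ p)
    (U : EuclideanSpace ℝ (Fin N) → ℝ)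
    (hUpos : ∀ x, 0 < U x) (hUsmooth : ContDiff ℝ (⊤ : ℕ∞) U)
    (hUeq : ∀ x, Mcal p U x = 0)
    (C₀ A : ℝ) (hC₀ : 0 < C₀) (hA : 1 ≤ A)
    (hUb : ∀ x : EuclideanSpace ℝ (Fin N), A ≤ ‖x‖ →
      U x ≤ C₀ * Real.exp (-‖x‖) * ‖x‖ ^ (((1 : ℝ) - N) / 2)) :
    ∃ C > 0, ∃ σ₀ : ℝ, ∀ (P : ℝ), 0 < P → ∀ (k : ℕ), 1 ≤ k → ∀ (c : Fin k → ℝ) (σ : ℝ),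
      σ₀ ≤ σ →
      (∀ i j : Fin k, ∀ l : ℤ, (i ≠ j ∨ l ≠ 0) → 2 * σ ≤ |c i - c j + P * l|) →
      ∀ ubar : EuclideanSpace ℝ (Fin N) → ℝ,
        (∀ x, ubar x = ∑' q : Fin k × ℤ, U (x - (c q.1 + P * (q.2 : ℝ)) • e1 N)) →
        (∀ x, lap ubar x =
          ∑' q : Fin k × ℤ, lap (fun y => U (y - (c q.1 + P * (q.2 : ℝ)) • e1 N)) x) →
        ∀ x, |Mcal p ubar x| ≤ C * Real.exp (-2 * σ) * σ ^ (((1 : ℝ) - N) / 2) := by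
  classical
  have hN0 : 0 < N := by omega
  have hNcast : (2:ℝ) ≤ (N:ℝ) := by exact_mod_cast hN
  have hνneg : ((1:ℝ) - N) / 2 ≤ 0 := by linarith
  -- global bound for U
  obtain ⟨B₀, hB₀⟩ := (isCompact_closedBall (0 : EuclideanSpace ℝ (Fin N)) A).exists_bound_of_continuousOn
    hUsmooth.continuous.continuousOn
  set M : ℝ := (‖B₀‖ + C₀) * Real.exp A with hM
  have hMpos : 0 < M := by positivity
  have hUdecay : ∀ y : EuclideanSpace ℝ (Fin N), U y ≤ M * Real.exp (-‖y‖) := by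
    intro y
    rcases le_or_gt A ‖y‖ with hcase | hcase
    · calc U y ≤ C₀ * Real.exp (-‖y‖) * ‖y‖ ^ (((1:ℝ) - N)/2) := hUb y hcase
        _ ≤ C₀ * Real.exp (-‖y‖) * 1 := by
            have : ‖y‖ ^ (((1:ℝ) - N)/2) ≤ 1 :=
              Real.rpow_le_one_of_one_le_of_nonpos (by linarith) hνneg
            have h0 : (0:ℝ) ≤ C₀ * Real.exp (-‖y‖) := by positivity
            nlinarith
        _ ≤ M * Real.exp (-‖y‖) := by
            rw [mul_one, hM]
            have h1 : (1:ℝ) ≤ Real.exp A := by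
              rw [← Real.exp_zero]; exact Real.exp_le_exp.mpr (by linarith)
            have h2 : (0:ℝ) ≤ ‖B₀‖ := norm_nonneg _
            have h3 : C₀ ≤ (‖B₀‖ + C₀) * Real.exp A := by nlinarith
            exact mul_le_mul_of_nonneg_right h3 (Real.exp_pos _).le
    · have h1 : U y ≤ ‖B₀‖ := by
        have hy : y ∈ Metric.closedBall (0 : EuclideanSpace ℝ (Fin N)) A := by
          simpa [Metric.mem_closedBall, dist_zero_right] using hcase.le
        calc U y ≤ |U y| := le_abs_self _
          _ = ‖U y‖ := (Real.norm_eq_abs _).symm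
          _ ≤ B₀ := hB₀ y hy
          _ ≤ ‖B₀‖ := le_abs_self _
      have h2 : (1:ℝ) ≤ Real.exp A * Real.exp (-‖y‖) := by
        rw [← Real.exp_add, ← Real.exp_zero]
        exact Real.exp_le_exp.mpr (by linarith)
      have h3 : (0:ℝ) ≤ ‖B₀‖ := norm_nonneg _
      calc U y ≤ ‖B₀‖ := h1
        _ ≤ ‖B₀‖ * (Real.exp A * Real.exp (-‖y‖)) := by nlinarith
        _ ≤ M * Real.exp (-‖y‖) := by
            rw [hM]; nlinarith [Real.exp_pos (-‖y‖), Real.exp_pos A]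
  -- the absolute lattice sum
  set T : ℝ := ∑' n : ℤ, Real.exp (-2 * |(n : ℝ)|) with hT
  have hTsum : Summable (fun n : ℤ => Real.exp (-2 * |(n : ℝ)|)) := aux_summable_int
  have hTpos : 0 < T := Summable.tsum_pos hTsum (fun n => (Real.exp_pos _).le) 0 (Real.exp_pos _)
  set H : ℝ := Real.exp 2 * T with hHdef
  have hH : 0 < H := by positivity
  set B : ℝ := 1 + M * H with hBdef
  have hB1 : (1:ℝ) ≤ B := by nlinarith
  set K : ℝ := (p - 1) * B ^ (p - 2) with hK
  have hK0 : 0 < K := by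
    have : (0:ℝ) < B ^ (p-2) := Real.rpow_pos_of_pos (by linarith) _
    nlinarith
  refine ⟨K * (M * C₀ * Real.exp 2) * H ^ 2, by positivity, A + 2, ?_⟩
  intro P hP k hk c σ hσ hsep ubar hubar hlap x
  have hσ1 : (1:ℝ) ≤ σ := by linarith
  have hσA : A ≤ σ := by linarith
  have hσ0 : (0:ℝ) < σ := by linarith
  have h2σ : (0:ℝ) < 2 * σ := by linarith
  -- basic geometry
  set b : Fin k × ℤ → ℝ := fun q => c q.1 + P * q.2 with hbdef
  have hsep' : ∀ q r : Fin k × ℤ, q ≠ r → 2 * σ ≤ |b q - b r| := by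
    rintro ⟨i, l⟩ ⟨j, m⟩ hqr
    have h1 : i ≠ j ∨ l - m ≠ 0 := by
      by_contra hcon
      push_neg at hcon
      exact hqr (by rw [Prod.ext_iff]; exact ⟨hcon.1, by omega⟩)
    have h2 := hsep i j (l - m) h1
    have h3 : c i - c j + P * ((l - m : ℤ) : ℝ) = b (i, l) - b (j, m) := by
      simp only [hbdef]
      push_cast
      ring
    rwa [h3] at h2
  set dd : Fin k × ℤ → ℝ := fun q => ‖x - b q • e1 N‖ with hdd
  set a : Fin k × ℤ → ℝ := fun q => U (x - b q • e1 N) with ha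
  have hapos : ∀ q, 0 < a q := fun q => hUpos _
  have haM : ∀ q, a q ≤ M * Real.exp (-(dd q)) := fun q => hUdecay _
  set x1 : ℝ := x ⟨0, hN0⟩ with hx1
  have he1ap : (e1 N) ⟨0, hN0⟩ = 1 := by
    simp [e1, hN0, EuclideanSpace.single_apply]
  have he1norm : ‖e1 N‖ = 1 := by
    simp [e1, hN0, EuclideanSpace.norm_single]
  have habsle : ∀ (y : EuclideanSpace ℝ (Fin N)) (i : Fin N), |y i| ≤ ‖y‖ := by
    intro y i
    rw [EuclideanSpace.norm_eq, ← Real.sqrt_sq_eq_abs]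
    apply Real.sqrt_le_sqrt
    calc y i ^ 2 = ‖y i‖ ^ 2 := by rw [Real.norm_eq_abs, sq_abs]
      _ ≤ ∑ j, ‖y j‖ ^ 2 :=
        Finset.single_le_sum (f := fun j => ‖y j‖ ^ 2) (fun j _ => sq_nonneg _)
          (Finset.mem_univ i)
  have htd : ∀ q, |x1 - b q| ≤ dd q := by
    intro q
    have hcoord : (x - b q • e1 N) ⟨0, hN0⟩ = x1 - b q := by
      simp [PiLp.sub_apply, PiLp.smul_apply, he1ap, hx1, smul_eq_mul]
    calc |x1 - b q| = |(x - b q • e1 N) ⟨0, hN0⟩| := by rw [hcoord]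
      _ ≤ dd q := habsle _ _
  -- floor labels
  set nn : Fin k × ℤ → ℤ := fun q => ⌊(b q - x1) / (2 * σ)⌋ with hnn
  have hninj : Function.Injective nn := by
    intro q r hqr
    by_contra hne
    have h2 := hsep' q r hne
    have hq1 : ((nn q : ℝ)) ≤ (b q - x1) / (2 * σ) := Int.floor_le _
    have hq2 : (b q - x1) / (2 * σ) < nn q + 1 := Int.lt_floor_add_one _
    have hr1 : ((nn r : ℝ)) ≤ (b r - x1) / (2 * σ) := Int.floor_le _
    have hr2 : (b r - x1) / (2 * σ) < nn r + 1 := Int.lt_floor_add_one _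
    rw [hqr] at hq1 hq2
    have habs : |b q - b r| < 2 * σ := aux_close σ (b q) (b r) x1 (nn r) h2σ hq1 hq2 hr1 hr2
    linarith
  set G : ℤ → ℝ := fun m => max (|(m : ℝ)| - 1) 0 with hG
  have hG0 : ∀ m : ℤ, 0 ≤ G m := fun m => le_max_right _ _
  have hGn : ∀ m : ℤ, |(m : ℝ)| - 1 ≤ G m := fun m => le_max_left _ _
  have htG : ∀ q, 2 * σ * G (nn q) ≤ |x1 - b q| := by
    intro q
    set u : ℝ := (b q - x1) / (2 * σ) with hu
    have h1 : ((nn q : ℝ)) ≤ u := Int.floor_le _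
    have h2 : u < nn q + 1 := Int.lt_floor_add_one _
    have h3 : |(nn q : ℝ)| - 1 ≤ |u| := by
      have e1 : |(nn q : ℝ)| ≤ |u| + |(nn q : ℝ) - u| := by
        calc |(nn q : ℝ)| = |u + ((nn q : ℝ) - u)| := by ring_nf
          _ ≤ |u| + |(nn q : ℝ) - u| := abs_add_le _ _
      have e2 : |(nn q : ℝ) - u| ≤ 1 := by
        rw [abs_le]; constructor <;> linarith
      linarith
    have h4 : G (nn q) ≤ |u| := max_le h3 (abs_nonneg u)
    have h5 : |u| * (2 * σ) = |x1 - b q| := by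
      rw [hu, abs_div, abs_of_pos h2σ]
      rw [div_mul_cancel₀ _ (ne_of_gt h2σ)]
      rw [abs_sub_comm]
    nlinarith [abs_nonneg u]
  -- weights
  set w : Fin k × ℤ → ℝ := fun q => Real.exp (-2 * G (nn q)) with hw
  have hw0 : ∀ q, 0 < w q := fun q => Real.exp_pos _
  have hwle : ∀ q, w q ≤ Real.exp 2 * Real.exp (-2 * |((nn q : ℤ) : ℝ)|) := by
    intro q
    rw [← Real.exp_add]
    apply Real.exp_le_exp.mpr
    have := hGn (nn q)
    linarith
  have hwnsum : Summable (fun q => Real.exp (-2 * |((nn q : ℤ) : ℝ)|)) :=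
    hTsum.comp_injective hninj
  have hwsum : Summable w :=
    Summable.of_nonneg_of_le (fun q => (hw0 q).le) hwle (hwnsum.mul_left _)
  have hwtsum : ∑' q, w q ≤ H := by
    calc ∑' q, w q ≤ ∑' q, Real.exp 2 * Real.exp (-2 * |((nn q : ℤ) : ℝ)|) :=
          Summable.tsum_le_tsum hwle hwsum (hwnsum.mul_left _)
      _ = Real.exp 2 * ∑' q, Real.exp (-2 * |((nn q : ℤ) : ℝ)|) := tsum_mul_left
      _ ≤ Real.exp 2 * T := by
          have h1 : ∑' q, Real.exp (-2 * |((nn q : ℤ) : ℝ)|) ≤ T :=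
            Summable.tsum_le_tsum_of_inj nn hninj (fun _ _ => (Real.exp_pos _).le)
              (fun q => le_refl _) hwnsum hTsum
          nlinarith [Real.exp_pos (2:ℝ)]
      _ = H := hHdef.symm
  have hexpdw : ∀ q, Real.exp (-(dd q)) ≤ w q := by
    intro q
    apply Real.exp_le_exp.mpr
    have h1 := htG q
    have h2 := htd q
    have h3 := hG0 (nn q)
    nlinarith
  have haMw : ∀ q, a q ≤ M * w q := by
    intro q
    calc a q ≤ M * Real.exp (-(dd q)) := haM q
      _ ≤ M * w q := by nlinarith [hexpdw q]
  have hasum : Summable a :=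
    Summable.of_nonneg_of_le (fun q => (hapos q).le) haMw (hwsum.mul_left _)
  set S : ℝ := ∑' q, a q with hS
  have hq0 : (0:ℕ) < k := hk
  have hS0 : 0 < S := Summable.tsum_pos hasum (fun q => (hapos q).le) (⟨0, hq0⟩, 0) (hapos _)
  have hSB : S ≤ M * H := by
    calc S ≤ ∑' q, M * w q := Summable.tsum_le_tsum haMw hasum (hwsum.mul_left _)
      _ = M * ∑' q, w q := tsum_mul_left
      _ ≤ M * H := by nlinarith
  have hSB' : S ≤ B := by rw [hBdef]; linarith
  have haS : ∀ q, a q ≤ S := fun q => Summable.le_tsum hasum q (fun r _ => (hapos r).le)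
  have haB : ∀ q, a q ≤ B := fun q => le_trans (haS q) hSB'
  have hrw : ∀ z : ℝ, 0 < z → z ^ p = z ^ (p - 1) * z := by
    intro z hz
    have := Real.rpow_add_one hz.ne' (p - 1)
    rw [show p - 1 + 1 = p by ring] at this
    exact this
  have hap_le : ∀ q, a q ^ p ≤ B ^ (p - 1) * a q := by
    intro q
    rw [hrw _ (hapos q)]
    have h1 : a q ^ (p - 1) ≤ B ^ (p - 1) :=
      Real.rpow_le_rpow (hapos q).le (haB q) (by linarith)
    nlinarith [hapos q]
  have hapsum : Summable (fun q => a q ^ p) :=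
    Summable.of_nonneg_of_le (fun q => Real.rpow_nonneg (hapos q).le p) hap_le
      (hasum.mul_left _)
  -- Laplacian identities
  have hlapU : ∀ z, lap U z = U z - U z ^ p := by
    intro z
    have h0 := hUeq z
    unfold Mcal at h0
    rw [max_eq_left (hUpos z).le] at h0
    linarith
  have hlapT : ∀ (v : EuclideanSpace ℝ (Fin N)) z,
      lap (fun y => U (y - v)) z = lap U (z - v) := by
    intro v z
    unfold lap
    apply Finset.sum_congr rfl
    intro i _
    have heq : (fun t : ℝ => U (z + t • EuclideanSpace.single i (1:ℝ) - v))
        = fun t : ℝ => U ((z - v) + t • EuclideanSpace.single i (1:ℝ)) := by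
      funext t
      rw [add_sub_right_comm]
    rw [heq]
  have hMcal : Mcal p ubar x = (∑' q, a q ^ p) - S ^ p := by
    have hux : ubar x = S := by
      rw [hubar x]
    have h1 : lap ubar x = S - ∑' q, a q ^ p := by
      rw [hlap x]
      have h2 : (∑' q : Fin k × ℤ, lap (fun y => U (y - (c q.1 + P * (q.2 : ℝ)) • e1 N)) x)
          = ∑' q, (a q - a q ^ p) := by
        apply tsum_congr
        intro q
        rw [show ((c q.1 + P * (q.2 : ℝ)) : ℝ) = b q from rfl, hlapT, hlapU]
      rw [h2, Summable.tsum_sub hasum hapsum]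
    unfold Mcal
    rw [max_eq_left (by rw [hux]; exact hS0.le), hux, h1]
    ring
  -- upper bound |Mcal| = S^p - Σ a^p
  have hsum_le : (∑' q, a q ^ p) ≤ S ^ p := by
    calc (∑' q, a q ^ p) ≤ ∑' q, S ^ (p - 1) * a q := by
          apply Summable.tsum_le_tsum _ hapsum (hasum.mul_left _)
          intro q
          rw [hrw _ (hapos q)]
          have h1 : a q ^ (p - 1) ≤ S ^ (p - 1) :=
            Real.rpow_le_rpow (hapos q).le (haS q) (by linarith)
          nlinarith [hapos q]
      _ = S ^ (p - 1) * S := by rw [tsum_mul_left]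
      _ = S ^ p := (hrw _ hS0).symm
  have habseq : |Mcal p ubar x| = S ^ p - ∑' q, a q ^ p := by
    rw [hMcal, abs_of_nonpos (by linarith), neg_sub]
  -- pairwise interaction bound
  have hddlb : ∀ q r : Fin k × ℤ, q ≠ r → 2 * σ ≤ dd q + dd r := by
    intro q r hqr
    have h1 := hsep' q r hqr
    have h2 : (x - b r • e1 N) - (x - b q • e1 N) = (b q - b r) • e1 N := by
      rw [sub_smul]
      abel
    have h3 : |b q - b r| ≤ dd q + dd r := by
      calc |b q - b r| = ‖(b q - b r) • e1 N‖ := by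
            rw [norm_smul, he1norm, mul_one, Real.norm_eq_abs]
        _ = ‖(x - b r • e1 N) - (x - b q • e1 N)‖ := by rw [h2]
        _ ≤ ‖x - b r • e1 N‖ + ‖x - b q • e1 N‖ := norm_sub_le _ _
        _ = dd q + dd r := by rw [hdd]; ring
    linarith
  have hfar : ∀ q, σ ≤ dd q → a q ≤ C₀ * Real.exp (-(dd q)) * σ ^ (((1:ℝ) - N) / 2) := by
    intro q hq
    have hA' : A ≤ dd q := le_trans hσA hq
    calc a q ≤ C₀ * Real.exp (-(dd q)) * (dd q) ^ (((1:ℝ) - N)/2) := hUb _ hA'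
      _ ≤ C₀ * Real.exp (-(dd q)) * σ ^ (((1:ℝ) - N)/2) := by
          have h1 : (dd q) ^ (((1:ℝ) - N)/2) ≤ σ ^ (((1:ℝ) - N)/2) :=
            Real.rpow_le_rpow_of_nonpos hσ0 hq hνneg
          have h0 : (0:ℝ) ≤ C₀ * Real.exp (-(dd q)) := by positivity
          nlinarith
  have hpair : ∀ q r : Fin k × ℤ, q ≠ r →
      a q * a r ≤ (M * C₀ * Real.exp 2) * σ ^ (((1:ℝ) - N)/2) * Real.exp (-2 * σ) * (w q * w r) := by
    intro q r hqr
    have hkey : ∀ s t : Fin k × ℤ, s ≠ t → dd s ≤ dd t →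
        a s * a t ≤ M * C₀ * σ ^ (((1:ℝ) - N)/2) * Real.exp (-(dd s) + -(dd t)) := by
      intro s t hst hle
      have hσt : σ ≤ dd t := by
        have := hddlb s t hst
        linarith
      have h1 := haM s
      have h2 := hfar t hσt
      calc a s * a t ≤ (M * Real.exp (-(dd s))) * (C₀ * Real.exp (-(dd t)) * σ ^ (((1:ℝ) - N)/2)) := by
            apply mul_le_mul h1 h2 (hapos t).le (by positivity)
        _ = M * C₀ * σ ^ (((1:ℝ) - N)/2) * Real.exp (-(dd s) + -(dd t)) := by
            rw [Real.exp_add]; ring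
    have hmain : a q * a r ≤ M * C₀ * σ ^ (((1:ℝ) - N)/2) * Real.exp (-(dd q) + -(dd r)) := by
      rcases le_total (dd q) (dd r) with hle | hle
      · exact hkey q r hqr hle
      · have := hkey r q (Ne.symm hqr) hle
        calc a q * a r = a r * a q := mul_comm _ _
          _ ≤ M * C₀ * σ ^ (((1:ℝ) - N)/2) * Real.exp (-(dd r) + -(dd q)) := this
          _ = M * C₀ * σ ^ (((1:ℝ) - N)/2) * Real.exp (-(dd q) + -(dd r)) := by
              rw [show -(dd r) + -(dd q) = -(dd q) + -(dd r) by ring]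
    have hexp2 : Real.exp (-(dd q) + -(dd r)) ≤ Real.exp 2 * Real.exp (-2 * σ) * (w q * w r) := by
      rw [hw]
      simp only []
      rw [← Real.exp_add, ← Real.exp_add, ← Real.exp_add]
      apply Real.exp_le_exp.mpr
      have hq1 := htG q
      have hq2 := htd q
      have hr1 := htG r
      have hr2 := htd r
      have hGq := hG0 (nn q)
      have hGr := hG0 (nn r)
      have hdq := hddlb q r hqr
      rcases le_or_gt (G (nn q) + G (nn r)) 1 with hcase | hcase
      · linarith
      · nlinarith
    calc a q * a r ≤ M * C₀ * σ ^ (((1:ℝ) - N)/2) * Real.exp (-(dd q) + -(dd r)) := hmain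
      _ ≤ M * C₀ * σ ^ (((1:ℝ) - N)/2) * (Real.exp 2 * Real.exp (-2 * σ) * (w q * w r)) := by
          have h0 : (0:ℝ) ≤ M * C₀ * σ ^ (((1:ℝ) - N)/2) := by positivity
          nlinarith
      _ = (M * C₀ * Real.exp 2) * σ ^ (((1:ℝ) - N)/2) * Real.exp (-2 * σ) * (w q * w r) := by
          ring
  -- per-index bound
  set E : ℝ := (M * C₀ * Real.exp 2) * σ ^ (((1:ℝ) - N)/2) * Real.exp (-2 * σ) with hE
  have hE0 : 0 < E := by
    have : (0:ℝ) < σ ^ (((1:ℝ) - N)/2) := Real.rpow_pos_of_pos hσ0 _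
    positivity
  have hq_bound : ∀ q, a q * (S - a q) ≤ E * H * w q := by
    intro q
    have hdecomp : S - a q = ∑' r, ite (r = q) 0 (a r) := by
      have h0 := Summable.tsum_eq_add_tsum_ite hasum q
      rw [hS]
      linarith
    have hsum_ite : Summable (fun r => ite (r = q) 0 (a r)) := by
      apply Summable.of_nonneg_of_le _ _ hasum
      · intro r; split <;> simp [(hapos _).le]
      · intro r; split
        · exact (hapos _).le
        · exact le_refl _
    have step : a q * (S - a q) = ∑' r, a q * ite (r = q) 0 (a r) := by
      rw [hdecomp, tsum_mul_left]
    rw [step]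
    calc (∑' r, a q * ite (r = q) 0 (a r)) ≤ ∑' r, (E * w q) * w r := by
          apply Summable.tsum_le_tsum _ (hsum_ite.mul_left _) (hwsum.mul_left _)
          intro r
          by_cases hr : r = q
          · subst hr
            rw [if_pos rfl, mul_zero]
            exact mul_nonneg (mul_nonneg hE0.le (hw0 _).le) (hw0 _).le
          · rw [if_neg hr]
            calc a q * a r ≤ E * (w q * w r) := hpair q r (fun hh => hr hh.symm)
              _ = (E * w q) * w r := by ring
      _ = (E * w q) * ∑' r, w r := tsum_mul_left
      _ ≤ (E * w q) * H := by
          exact mul_le_mul_of_nonneg_left hwtsum (mul_nonneg hE0.le (hw0 q).le)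
      _ = E * H * w q := by ring
  -- main estimate
  have hsub_sum : Summable (fun q => a q * S ^ (p-1) - a q ^ p) :=
    (hasum.mul_right _).sub hapsum
  have hmain : S ^ p - (∑' q, a q ^ p) ≤ K * (E * H * H) := by
    have h1 : S ^ p = ∑' q, a q * S ^ (p - 1) := by
      rw [tsum_mul_right, ← hS, hrw _ hS0]
      ring
    rw [h1, ← Summable.tsum_sub (hasum.mul_right _) hapsum]
    calc (∑' q, (a q * S ^ (p-1) - a q ^ p)) ≤ ∑' q, K * (E * H * w q) := by
          apply Summable.tsum_le_tsum _ hsub_sum ((hwsum.mul_left _).mul_left _)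
          intro q
          have step1 : a q * S ^ (p-1) - a q ^ p = a q * (S ^ (p-1) - a q ^ (p-1)) := by
            rw [mul_sub, hrw _ (hapos q)]
            ring
          rw [step1]
          have step2 : S ^ (p-1) - a q ^ (p-1) ≤ (p-1) * B ^ (p-2) * (S - a q) := by
            have := aux_rpow_diff (p-1) B (by linarith) hB1 (hapos q).le (haS q) hSB'
            rw [show p - 1 - 1 = p - 2 by ring] at this
            exact this
          calc a q * (S ^ (p-1) - a q ^ (p-1)) ≤ a q * ((p-1) * B ^ (p-2) * (S - a q)) := by
                apply mul_le_mul_of_nonneg_left step2 (hapos q).le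
            _ = K * (a q * (S - a q)) := by rw [hK]; ring
            _ ≤ K * (E * H * w q) := by
                have := hq_bound q
                nlinarith
      _ = K * (E * H * ∑' q, w q) := by
          rw [tsum_mul_left]
          congr 1
          rw [tsum_mul_left]
      _ ≤ K * (E * H * H) := by
          have h2 : E * H * (∑' q, w q) ≤ E * H * H :=
            mul_le_mul_of_nonneg_left hwtsum (mul_nonneg hE0.le hH.le)
          exact mul_le_mul_of_nonneg_left h2 hK0.le
  calc |Mcal p ubar x| = S ^ p - ∑' q, a q ^ p := habseq
    _ ≤ K * (E * H * H) := hmain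
    _ = K * (M * C₀ * Real.exp 2) * H ^ 2 * Real.exp (-2 * σ) * σ ^ (((1:ℝ) - N)/2) := by
        rw [hE]; ring
end
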